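/- arXiv:2301.01022 — 8 statements merged into one kernel-verified Lean document; each statement's English description precedes it below -/
import Mathlib

section
/- For all real t ≥ 1 and all real γ > 1, the function g(t) = ((γ+1)/(2γ²(γ-1)))·t^(2γ) - (1/(γ-1))·t^(γ+1) + ((γ+1)/γ²)·t^γ - 1/(2γ²) is nonnegative. -/
theorem stmt_1 (γ t : ℝ) (hγ : 1 < γ) (ht : 1 ≤ t) :
    0 ≤ ((γ+1)/(2*γ^2*(γ-1))) * t ^ (2*γ) - (1/(γ-1)) * t ^ (γ+1)
      + ((γ+1)/γ^2) * t ^ γ - 1/(2*γ^2) := by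
  have hγ0 : (0:ℝ) < γ := by linarith
  set G : ℝ → ℝ := fun x =>
    ((γ+1)/(2*γ^2*(γ-1))) * x ^ (2*γ) - (1/(γ-1)) * x ^ (γ+1)
      + ((γ+1)/γ^2) * x ^ γ - 1/(2*γ^2) with hG
  have hderiv : ∀ x : ℝ, 0 < x → HasDerivAt G
      (((γ+1)/(2*γ^2*(γ-1))) * (2*γ * x ^ (2*γ-1))
        - (1/(γ-1)) * ((γ+1) * x ^ (γ+1-1))
        + ((γ+1)/γ^2) * (γ * x ^ (γ-1))) x := by
    intro x hx
    have h1 := (Real.hasDerivAt_rpow_const (p := 2*γ) (Or.inl hx.ne'))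
    have h2 := (Real.hasDerivAt_rpow_const (p := γ+1) (Or.inl hx.ne'))
    have h3 := (Real.hasDerivAt_rpow_const (p := γ) (Or.inl hx.ne'))
    exact (((h1.const_mul _).sub (h2.const_mul _)).add (h3.const_mul _)).sub_const _
  have hmono : MonotoneOn G (Set.Ici (1:ℝ)) := by
    apply monotoneOn_of_deriv_nonneg (convex_Ici 1)
    · intro x hx
      have hx0 : (0:ℝ) < x := lt_of_lt_of_le one_pos hx
      exact (hderiv x hx0).continuousAt.continuousWithinAt
    · intro x hx
      rw [interior_Ici] at hx
      have hx0 : (0:ℝ) < x := lt_trans one_pos hx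
      exact (hderiv x hx0).differentiableAt.differentiableWithinAt
    · intro x hx
      rw [interior_Ici] at hx
      have hx0 : (0:ℝ) < x := lt_trans one_pos hx
      rw [(hderiv x hx0).deriv]
      have hx1 : (1:ℝ) ≤ x := le_of_lt hx
      -- Bernoulli: x^γ ≥ 1 + γ*(x-1)
      have hbern : 1 + γ * (x - 1) ≤ x ^ γ := by
        have := one_add_mul_self_le_rpow_one_add (s := x - 1) (by linarith) (le_of_lt hγ)
        simpa using this
      have e1 : x ^ (2*γ-1) = x ^ γ * x ^ (γ-1) := by
        rw [← Real.rpow_add hx0]; ring_nf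
      have e2 : x ^ (γ+1-1) = x * x ^ (γ-1) := by
        rw [show γ + 1 - 1 = (γ - 1) + 1 by ring, Real.rpow_add hx0, Real.rpow_one]; ring
      rw [e1, e2]
      have hxg1 : (0:ℝ) ≤ x ^ (γ-1) := Real.rpow_nonneg (le_of_lt hx0) _
      have key : 0 ≤ (x ^ γ - γ * x + (γ - 1)) * x ^ (γ-1) := by
        apply mul_nonneg _ hxg1
        nlinarith [hbern]
      have hc : (0:ℝ) < (γ+1)/(γ*(γ-1)) := div_pos (by linarith) (by nlinarith)
      have expand : ((γ+1)/(2*γ^2*(γ-1))) * (2*γ * (x ^ γ * x ^ (γ-1)))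
          - (1/(γ-1)) * ((γ+1) * (x * x ^ (γ-1)))
          + ((γ+1)/γ^2) * (γ * x ^ (γ-1))
          = ((γ+1)/(γ*(γ-1))) * ((x ^ γ - γ * x + (γ - 1)) * x ^ (γ-1)) := by
        have h1 : γ ≠ 0 := ne_of_gt hγ0
        have h2 : γ - 1 ≠ 0 := by linarith
        field_simp
      rw [expand]
      exact mul_nonneg (le_of_lt hc) key
  have hG1 : G 1 = 0 := by
    simp only [hG, Real.one_rpow]
    have h1 : γ ≠ 0 := ne_of_gt hγ0
    have h2 : γ - 1 ≠ 0 := by linarith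
    field_simp
    ring
  have := hmono (Set.self_mem_Ici) (Set.mem_Ici.mpr ht) ht
  rw [hG1] at this
  exact this
end

section
/- For real γ > 1 and t ≥ 1, the third derivative of g(t) = ((γ+1)/(2γ²(γ-1)))·t^(2γ) - (1/(γ-1))·t^(γ+1) + ((γ+1)/γ²)·t^γ - 1/(2γ²) is nonnegative, i.e., g'''(t) ≥ 0 for all t ≥ 1. -/
lemma aux_hasDerivAt (A B C p q r : ℝ) {x : ℝ} (hx : 0 < x) :
    HasDerivAt (fun y : ℝ => A * y ^ p - B * y ^ q + C * y ^ r)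
      (A * (p * x ^ (p-1)) - B * (q * x ^ (q-1)) + C * (r * x ^ (r-1))) x := by
  have h1 := (Real.hasDerivAt_rpow_const (p := p) (Or.inl hx.ne')).const_mul A
  have h2 := (Real.hasDerivAt_rpow_const (p := q) (Or.inl hx.ne')).const_mul B
  have h3 := (Real.hasDerivAt_rpow_const (p := r) (Or.inl hx.ne')).const_mul C
  exact (h1.sub h2).add h3

lemma aux_deriv_eq {f1 f2 : ℝ → ℝ} (h : ∀ x : ℝ, 0 < x → f1 x = f2 x)
    {t : ℝ} (ht : 0 < t) : deriv f1 t = deriv f2 t := by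
  apply Filter.EventuallyEq.deriv_eq
  filter_upwards [isOpen_Ioi.mem_nhds (show t ∈ Set.Ioi (0:ℝ) from ht)] with x hx
  exact h x hx

theorem stmt_3 (γ : ℝ) (hγ : 1 < γ) (g : ℝ → ℝ)
    (hg : g = fun t : ℝ => ((γ+1)/(2*γ^2*(γ-1))) * t ^ (2*γ) - (1/(γ-1)) * t ^ (γ+1)
      + ((γ+1)/γ^2) * t ^ γ - 1/(2*γ^2)) :
    ∀ t : ℝ, 1 ≤ t → 0 ≤ deriv (deriv (deriv g)) t := by
  have hγ0 : (0:ℝ) < γ := by linarith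
  set A : ℝ := (γ+1)/(2*γ^2*(γ-1)) with hA
  set B : ℝ := 1/(γ-1) with hB
  set C : ℝ := (γ+1)/γ^2 with hC
  set f1 : ℝ → ℝ := fun x => (A*(2*γ)) * x ^ (2*γ-1) - (B*(γ+1)) * x ^ γ
      + (C*γ) * x ^ (γ-1) with hf1
  set f2 : ℝ → ℝ := fun x => (A*(2*γ)*(2*γ-1)) * x ^ (2*γ-1-1)
      - (B*(γ+1)*γ) * x ^ (γ-1) + (C*γ*(γ-1)) * x ^ (γ-1-1) with hf2
  set f3 : ℝ → ℝ := fun x => (A*(2*γ)*(2*γ-1)*(2*γ-1-1)) * x ^ (2*γ-1-1-1)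
      - (B*(γ+1)*γ*(γ-1)) * x ^ (γ-1-1) + (C*γ*(γ-1)*(γ-1-1)) * x ^ (γ-1-1-1) with hf3
  have key1 : ∀ x : ℝ, 0 < x → deriv g x = f1 x := by
    intro x hx
    have h := ((aux_hasDerivAt A B C (2*γ) (γ+1) γ hx).sub_const (1/(2*γ^2)))
    rw [hg]
    rw [show (fun t : ℝ => A * t ^ (2*γ) - B * t ^ (γ+1) + C * t ^ γ - 1/(2*γ^2))
        = fun t : ℝ => (A * t ^ (2*γ) - B * t ^ (γ+1) + C * t ^ γ) - 1/(2*γ^2) from rfl]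
    rw [h.deriv, hf1]
    have e : γ + 1 - 1 = γ := by ring
    rw [e]; ring
  have key2 : ∀ x : ℝ, 0 < x → deriv (deriv g) x = f2 x := by
    intro x hx
    rw [aux_deriv_eq key1 hx, hf1,
      (aux_hasDerivAt (A*(2*γ)) (B*(γ+1)) (C*γ) (2*γ-1) γ (γ-1) hx).deriv, hf2]
    ring
  have key3 : ∀ x : ℝ, 0 < x → deriv (deriv (deriv g)) x = f3 x := by
    intro x hx
    rw [aux_deriv_eq key2 hx, hf2,
      (aux_hasDerivAt (A*(2*γ)*(2*γ-1)) (B*(γ+1)*γ) (C*γ*(γ-1)) (2*γ-1-1) (γ-1) (γ-1-1) hx).deriv,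
      hf3]
    ring
  intro t ht
  have ht0 : (0:ℝ) < t := by linarith
  rw [key3 t ht0]; simp only [hf3]
  -- rewrite powers in terms of t ^ (γ-3)
  have e1 : (2*γ-1-1-1 : ℝ) = (γ-3) + γ := by ring
  have e2 : (γ-1-1 : ℝ) = (γ-3) + 1 := by ring
  have e3 : (γ-1-1-1 : ℝ) = γ - 3 := by ring
  rw [e1, e3, e2, Real.rpow_add ht0, Real.rpow_add ht0, Real.rpow_one]
  have hber : 1 + γ * (t - 1) ≤ t ^ γ := by
    have := one_add_mul_self_le_rpow_one_add (s := t - 1) (by linarith) hγ.le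
    simpa using this
  have hpow_pos : 0 < t ^ (γ-3) := Real.rpow_pos_of_pos ht0 _
  have hH : 0 ≤ 2*(2*γ-1) * t ^ γ - γ^2 * t + (γ-1)*(γ-2) := by
    nlinarith [hber, mul_nonneg (by nlinarith : (0:ℝ) ≤ γ*(3*γ-2)) (by linarith : (0:ℝ) ≤ t - 1)]
  have hfac : (A*(2*γ)*(2*γ-1)*(2*γ-1-1)) * (t ^ (γ-3) * t ^ γ)
      - (B*(γ+1)*γ*(γ-1)) * (t ^ (γ-3) * t) + (C*γ*(γ-1)*(γ-3+1)) * t ^ (γ-3)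
      = (γ+1)/γ * t ^ (γ-3) * (2*(2*γ-1) * t ^ γ - γ^2 * t + (γ-1)*(γ-2)) := by
    rw [hA, hB, hC]
    have h1 : γ ≠ 0 := by positivity
    have h2 : γ - 1 ≠ 0 := by intro h; apply absurd h; intro h; nlinarith
    field_simp
    ring
  rw [hfac]
  have : (0:ℝ) ≤ (γ+1)/γ := by positivity
  positivity
end

section
/- Let 1 < γ ≤ 5/3, θ = (γ-1)/2, ρ̄ > 0. For all ρ > ρ̄: ((γ+1)/(2γ²(γ−1)))·ρ^(γ+θ) − (1/(γ−1))·ρ̄^(γ−1)·ρ^(θ+1) + ((γ+1)/γ²)·ρ̄^γ·ρ^θ − (1/(2γ²))·ρ̄^(2γ)·ρ^(−θ−1) > 0. -/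
open Real Set

lemma bern {γ x : ℝ} (hγ : 1 < γ) (hx : 1 < x) : 0 < x ^ γ - γ * x + γ - 1 := by
  have h := one_add_mul_self_lt_rpow_one_add (s := x - 1) (by linarith) (by linarith) hγ
  have : (1 : ℝ) + (x - 1) = x := by ring
  rw [this] at h
  nlinarith [h]

lemma Fpos {γ : ℝ} (hγ : 1 < γ) {x : ℝ} (hx : 1 < x) :
    0 < (γ+1)/(2*γ^2*(γ-1)) * x ^ (2*γ) - (1/(γ-1)) * x ^ (γ+1)
        + ((γ+1)/γ^2) * x ^ γ - 1/(2*γ^2) := by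
  have hγ0 : (0:ℝ) < γ := by linarith
  set F : ℝ → ℝ := fun y => (γ+1)/(2*γ^2*(γ-1)) * y ^ (2*γ) - (1/(γ-1)) * y ^ (γ+1)
        + ((γ+1)/γ^2) * y ^ γ - 1/(2*γ^2) with hF
  have hder : ∀ y ∈ interior (Ici (1:ℝ)), 0 < deriv F y := by
    intro y hy
    rw [interior_Ici] at hy
    have hy1 : (1:ℝ) < y := hy
    have hy0 : (0:ℝ) < y := by linarith
    have h1 : HasDerivAt (fun z : ℝ => z ^ (2*γ)) (2*γ * y ^ (2*γ - 1)) y :=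
      Real.hasDerivAt_rpow_const (Or.inl hy0.ne')
    have h2 : HasDerivAt (fun z : ℝ => z ^ (γ+1)) ((γ+1) * y ^ (γ+1 - 1)) y :=
      Real.hasDerivAt_rpow_const (Or.inl hy0.ne')
    have h3 : HasDerivAt (fun z : ℝ => z ^ γ) (γ * y ^ (γ - 1)) y :=
      Real.hasDerivAt_rpow_const (Or.inl hy0.ne')
    have hD : HasDerivAt F
        ((γ+1)/(2*γ^2*(γ-1)) * (2*γ * y ^ (2*γ - 1)) - (1/(γ-1)) * ((γ+1) * y ^ (γ+1-1))
          + ((γ+1)/γ^2) * (γ * y ^ (γ-1)) - 0) y := by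
      exact (((h1.const_mul _).sub (h2.const_mul _)).add (h3.const_mul _)).sub (hasDerivAt_const _ _)
    rw [hD.deriv]
    have e1 : y ^ (2*γ - 1) = y ^ (γ - 1) * y ^ γ := by
      rw [← Real.rpow_add hy0]; congr 1; ring
    have e2 : y ^ (γ + 1 - 1) = y ^ (γ - 1) * y := by
      rw [show γ + 1 - 1 = (γ - 1) + 1 by ring, Real.rpow_add hy0, Real.rpow_one]
    rw [e1, e2]
    have hne : γ ≠ 0 := by linarith
    have h1ne : γ - 1 ≠ 0 := by linarith
    have hb := bern hγ hy1
    have hyp : 0 < y ^ (γ - 1) := Real.rpow_pos_of_pos hy0 _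
    have key : (γ+1)/(2*γ^2*(γ-1)) * (2*γ * (y ^ (γ-1) * y ^ γ)) - (1/(γ-1)) * ((γ+1) * (y ^ (γ-1) * y))
          + ((γ+1)/γ^2) * (γ * y ^ (γ-1)) - 0
        = (γ+1)/(γ*(γ-1)) * y ^ (γ-1) * (y ^ γ - γ * y + γ - 1) := by
      field_simp
      ring
    rw [key]
    have hc : 0 < (γ+1)/(γ*(γ-1)) := by
      apply div_pos <;> nlinarith
    exact mul_pos (mul_pos hc hyp) hb
  have hcont : ContinuousOn F (Ici (1:ℝ)) := by
    intro y hy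
    have hy0 : y ≠ 0 := by simp only [mem_Ici] at hy; intro h; rw [h] at hy; linarith
    exact ContinuousAt.continuousWithinAt (by
      apply ContinuousAt.sub
      apply ContinuousAt.add
      apply ContinuousAt.sub
      · exact ((Real.continuousAt_rpow_const y _ (Or.inl hy0)).const_mul _)
      · exact ((Real.continuousAt_rpow_const y _ (Or.inl hy0)).const_mul _)
      · exact ((Real.continuousAt_rpow_const y _ (Or.inl hy0)).const_mul _)
      · exact continuousAt_const)
  have hmono := StrictMonoOn.lt_iff_lt (strictMonoOn_of_deriv_pos (convex_Ici 1) hcont hder)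
    (self_mem_Ici) (mem_Ici.mpr hx.le)
  have hlt : F 1 < F x := (hmono).mpr hx
  have hF1 : F 1 = 0 := by
    have hne : γ ≠ 0 := by linarith
    have h1ne : γ - 1 ≠ 0 := by linarith
    simp only [hF, Real.one_rpow]
    field_simp
    ring
  rw [hF1] at hlt
  exact hlt

theorem stmt_10 (γ θ ρb ρ : ℝ) (hγ1 : 1 < γ) (hγ2 : γ ≤ 5/3)
    (hθ : θ = (γ-1)/2) (hρb : 0 < ρb) (hρ : ρb < ρ) :
    0 < ((γ+1)/(2*γ^2*(γ-1))) * ρ ^ (γ+θ)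
      - (1/(γ-1)) * ρb ^ (γ-1) * ρ ^ (θ+1)
      + ((γ+1)/γ^2) * ρb ^ γ * ρ ^ θ
      - (1/(2*γ^2)) * ρb ^ (2*γ) * ρ ^ (-θ-1) := by
  have hρ0 : (0:ℝ) < ρ := lt_trans hρb hρ
  set x := ρ / ρb with hxdef
  have hx1 : 1 < x := (one_lt_div hρb).mpr hρ
  have hx0 : (0:ℝ) < x := by linarith
  have hρx : ρ = ρb * x := by rw [hxdef]; field_simp
  -- rewrite each ρ power
  have split : ∀ p : ℝ, ρ ^ p = ρb ^ p * x ^ p := fun p => by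
    rw [hρx, Real.mul_rpow hρb.le hx0.le]
  rw [split (γ+θ), split (θ+1), split θ, split (-θ-1)]
  have hb : ∀ p q : ℝ, ρb ^ p * ρb ^ q = ρb ^ (p + q) := fun p q =>
    (Real.rpow_add hρb _ _).symm
  have key : ((γ+1)/(2*γ^2*(γ-1))) * (ρb ^ (γ+θ) * x ^ (γ+θ))
      - (1/(γ-1)) * ρb ^ (γ-1) * (ρb ^ (θ+1) * x ^ (θ+1))
      + ((γ+1)/γ^2) * ρb ^ γ * (ρb ^ θ * x ^ θ)
      - (1/(2*γ^2)) * ρb ^ (2*γ) * (ρb ^ (-θ-1) * x ^ (-θ-1))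
      = ρb ^ (γ+θ) * (x ^ (-θ-1) *
        ((γ+1)/(2*γ^2*(γ-1)) * x ^ (2*γ) - (1/(γ-1)) * x ^ (γ+1)
        + ((γ+1)/γ^2) * x ^ γ - 1/(2*γ^2))) := by
    have e2 : ρb ^ (γ-1) * ρb ^ (θ+1) = ρb ^ (γ+θ) := by
      rw [hb]; ring_nf
    have e3 : ρb ^ γ * ρb ^ θ = ρb ^ (γ+θ) := by rw [hb]
    have e4 : ρb ^ (2*γ) * ρb ^ (-θ-1) = ρb ^ (γ+θ) := by
      rw [hb]; congr 1; rw [hθ]; ring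
    have f1 : x ^ (-θ-1) * x ^ (2*γ) = x ^ (γ+θ) := by
      rw [← Real.rpow_add hx0]; congr 1; rw [hθ]; ring
    have f2 : x ^ (-θ-1) * x ^ (γ+1) = x ^ (θ+1) := by
      rw [← Real.rpow_add hx0]; congr 1; rw [hθ]; ring
    have f3 : x ^ (-θ-1) * x ^ γ = x ^ θ := by
      rw [← Real.rpow_add hx0]; congr 1; rw [hθ]; ring
    calc ((γ+1)/(2*γ^2*(γ-1))) * (ρb ^ (γ+θ) * x ^ (γ+θ))
      - (1/(γ-1)) * ρb ^ (γ-1) * (ρb ^ (θ+1) * x ^ (θ+1))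
      + ((γ+1)/γ^2) * ρb ^ γ * (ρb ^ θ * x ^ θ)
      - (1/(2*γ^2)) * ρb ^ (2*γ) * (ρb ^ (-θ-1) * x ^ (-θ-1))
        = ρb ^ (γ+θ) * (((γ+1)/(2*γ^2*(γ-1))) * x ^ (γ+θ)
            - (ρb ^ (γ-1) * ρb ^ (θ+1)) / ρb ^ (γ+θ) * ρb ^ (γ+θ) / ρb ^ (γ+θ) * 0
            + 0) + (- (1/(γ-1)) * (ρb ^ (γ-1) * ρb ^ (θ+1)) * x ^ (θ+1)
            + ((γ+1)/γ^2) * (ρb ^ γ * ρb ^ θ) * x ^ θ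
            - (1/(2*γ^2)) * (ρb ^ (2*γ) * ρb ^ (-θ-1)) * x ^ (-θ-1)) := by ring
      _ = ρb ^ (γ+θ) * (((γ+1)/(2*γ^2*(γ-1))) * x ^ (γ+θ)
            - (1/(γ-1)) * x ^ (θ+1)
            + ((γ+1)/γ^2) * x ^ θ
            - (1/(2*γ^2)) * x ^ (-θ-1)) := by rw [e2, e3, e4]; ring
      _ = ρb ^ (γ+θ) * (x ^ (-θ-1) *
        ((γ+1)/(2*γ^2*(γ-1)) * x ^ (2*γ) - (1/(γ-1)) * x ^ (γ+1)
        + ((γ+1)/γ^2) * x ^ γ - 1/(2*γ^2))) := by rw [← f1, ← f2, ← f3]; ring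
  rw [key]
  have hpos := Fpos hγ1 hx1
  positivity
end

section
/- Let 1 < γ ≤ 5/3. Define h(X) = (5γ−3)X³ − 2(3γ−1)X² + (3−γ)X + 2(γ−1). Then for every X in the interval [ξ, η], where ξ is the smaller root of (5γ−3)X² − 2(3γ−1)X + γ(3−γ) = 0 and η is the larger root of 3(5γ−3)X² − 8γX + 3 − γ = 0, we have h(X) ≥ 0. -/
set_option maxHeartbeats 1000000 in
theorem stmt_12 (γ ξ η : ℝ) (hγ1 : 1 < γ) (hγ2 : γ ≤ 5/3)
    (hξ : ξ = ((3*γ-1) - Real.sqrt ((3*γ-1)^2 - (5*γ-3)*(γ*(3-γ)))) / (5*γ-3))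
    (hη : η = (4*γ + Real.sqrt ((4*γ)^2 - 3*(5*γ-3)*(3-γ))) / (3*(5*γ-3))) :
    ∀ X : ℝ, ξ ≤ X → X ≤ η →
      0 ≤ (5*γ-3)*X^3 - 2*(3*γ-1)*X^2 + (3-γ)*X + 2*(γ-1) := by
  intro X hX1 hX2
  have hc : 0 < 5*γ-3 := by linarith
  set s1 := Real.sqrt ((3*γ-1)^2 - (5*γ-3)*(γ*(3-γ))) with hs1def
  set s2 := Real.sqrt ((4*γ)^2 - 3*(5*γ-3)*(3-γ)) with hs2def
  have h1nn : (0:ℝ) ≤ (3*γ-1)^2 - (5*γ-3)*(γ*(3-γ)) := by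
    nlinarith [mul_nonneg (sq_nonneg (γ-1)) (show (0:ℝ) ≤ 5*γ+1 by linarith)]
  have h2nn : (0:ℝ) ≤ (4*γ)^2 - 3*(5*γ-3)*(3-γ) := by
    nlinarith [sq_nonneg (31*γ-27)]
  have hs1sq : s1^2 = (3*γ-1)^2 - (5*γ-3)*(γ*(3-γ)) := Real.sq_sqrt h1nn
  have hs2sq : s2^2 = (4*γ)^2 - 3*(5*γ-3)*(3-γ) := Real.sq_sqrt h2nn
  have hs1nn : 0 ≤ s1 := Real.sqrt_nonneg _
  have hs2nn : 0 ≤ s2 := Real.sqrt_nonneg _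
  have hcξ : (5*γ-3)*ξ = (3*γ-1) - s1 := by
    rw [hξ]; field_simp
  have hcη : 3*(5*γ-3)*η = 4*γ + s2 := by
    rw [hη]; field_simp
  -- quadratic relations
  have hξq : (5*γ-3)*ξ^2 - 2*(3*γ-1)*ξ + γ*(3-γ) = 0 := by
    have h : (5*γ-3)*((5*γ-3)*ξ^2 - 2*(3*γ-1)*ξ + γ*(3-γ)) = 0 := by
      linear_combination ((5*γ-3)*ξ - (3*γ-1) - s1) * hcξ + hs1sq
    rcases mul_eq_zero.1 h with h' | h'
    · exact absurd h' (by linarith)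
    · exact h'
  have hηq : 3*(5*γ-3)*η^2 - 8*γ*η + (3-γ) = 0 := by
    have h : (3*(5*γ-3))*(3*(5*γ-3)*η^2 - 8*γ*η + (3-γ)) = 0 := by
      linear_combination (3*(5*γ-3)*η - 4*γ + s2) * hcη + hs2sq
    rcases mul_eq_zero.1 h with h' | h'
    · exact absurd h' (by linarith)
    · exact h'
  -- η ≤ 1
  have hs2le : s2 ≤ 11*γ - 9 := by
    have h : s2 ≤ Real.sqrt ((11*γ-9)^2) := by
      rw [hs2def]
      exact Real.sqrt_le_sqrt (by nlinarith [mul_pos hc (show (0:ℝ) < γ - 1 by linarith)])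
    rwa [Real.sqrt_sq (by linarith : (0:ℝ) ≤ 11*γ-9)] at h
  have hη1 : η ≤ 1 := by
    have h3 : (3*(5*γ-3)) * η ≤ (3*(5*γ-3)) * 1 := by
      rw [mul_one]; rw [hcη]; linarith
    exact le_of_mul_le_mul_left h3 (by linarith)
  have hX1' : X ≤ 1 := le_trans hX2 hη1
  -- s1 ≥ (γ-1)^2
  have hs1ge : (γ-1)^2 ≤ s1 := by
    have h : Real.sqrt (((γ-1)^2)^2) ≤ s1 := by
      rw [hs1def]
      refine Real.sqrt_le_sqrt ?_
      nlinarith [mul_nonneg (sq_nonneg (γ-1)) (show (0:ℝ) ≤ 5*γ+1-(γ-1)^2 by nlinarith [sq_nonneg (γ-1)])]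
    rwa [Real.sqrt_sq (sq_nonneg _)] at h
  -- q(ξ) ≤ 0 and q(η) ≤ 0
  have hqξ : (5*γ-3)*ξ^2 - (γ+1)*ξ - 2*(γ-1) ≤ 0 := by
    have h : (5*γ-3)*ξ^2 - (γ+1)*ξ - 2*(γ-1) = (5*γ-3)*ξ + γ^2 - 5*γ + 2 := by
      linear_combination hξq
    rw [h, hcξ]
    nlinarith [hs1ge]
  have hqη : (5*γ-3)*η^2 - (γ+1)*η - 2*(γ-1) ≤ 0 := by
    have h : (5*γ-3)*η^2 - (γ+1)*η - 2*(γ-1) = ((5*γ-3)*η - (5*γ-3))/3 := by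
      linear_combination (1/3 : ℝ) * hηq
    rw [h]
    have h2 : (5*γ-3)*η ≤ (5*γ-3)*1 := mul_le_mul_of_nonneg_left hη1 hc.le
    rw [mul_one] at h2
    linarith
  -- convexity: q(X) ≤ 0 on [ξ, η]
  have hXξ : 0 ≤ X - ξ := by linarith
  have hηX : 0 ≤ η - X := by linarith
  have hqX : (5*γ-3)*X^2 - (γ+1)*X - 2*(γ-1) ≤ 0 := by
    have key : ((5*γ-3)*X^2 - (γ+1)*X - 2*(γ-1)) * (η - ξ) ≤ 0 := by
      have e : ((5*γ-3)*X^2 - (γ+1)*X - 2*(γ-1)) * (η - ξ) =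
          (η-X)*((5*γ-3)*ξ^2 - (γ+1)*ξ - 2*(γ-1))
          + (X-ξ)*((5*γ-3)*η^2 - (γ+1)*η - 2*(γ-1))
          - (5*γ-3)*(X-ξ)*(η-X)*(η-ξ) := by ring
      have t1 : (η-X)*((5*γ-3)*ξ^2 - (γ+1)*ξ - 2*(γ-1)) ≤ 0 :=
        mul_nonpos_of_nonneg_of_nonpos hηX hqξ
      have t2 : (X-ξ)*((5*γ-3)*η^2 - (γ+1)*η - 2*(γ-1)) ≤ 0 :=
        mul_nonpos_of_nonneg_of_nonpos hXξ hqη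
      have t3 : 0 ≤ (5*γ-3)*(X-ξ)*(η-X)*(η-ξ) :=
        mul_nonneg (mul_nonneg (mul_nonneg hc.le hXξ) hηX) (by linarith)
      rw [e]; linarith
    rcases eq_or_lt_of_le (show ξ ≤ η by linarith) with h | h
    · have hXeq : X = ξ := le_antisymm (h ▸ hX2) hX1
      rw [hXeq]; exact hqξ
    · nlinarith [key]
  -- h(X) = (1-X)*(-(q(X)))
  have e2 : (5*γ-3)*X^3 - 2*(3*γ-1)*X^2 + (3-γ)*X + 2*(γ-1)
      = (1-X) * (-((5*γ-3)*X^2 - (γ+1)*X - 2*(γ-1))) := by ring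
  rw [e2]
  exact mul_nonneg (by linarith) (by linarith)
end

section
/- Let γ with 1 < γ ≤ 5/3, θ = (γ−1)/2, ρ̄ > 0. If ρ ≥ 0, v real, and z = v − ρ^θ/θ ≤ −ρ̄^θ/θ, then g₁(ρ,v) := ρ^(γ+θ)/(γ(γ−1)) + ρ^γ·v/γ + ρ^(θ+1)·v²/2 − (ρ̄^γ/γ)·(v − ρ^θ) − (ρ̄^(γ−1)/(γ−1))·ρ^(θ+1) ≥ 0, and g₁(ρ,v) = 0 only if ρ = ρ̄ and z = −ρ̄^θ/θ. -/
/-!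
Write `γ = 2θ + 1` and `p = ρ^θ`. All terms of g₁ are homogeneous of the same degree under
`ρ ↦ λρ, ρ̄ ↦ λρ̄, v ↦ λ^θ v`, so one may take `ρ̄ = 1`. Then g₁ is a quadratic polynomial in
`w = (p - 1)/θ - v ≥ 0` with leading coefficient of sign `ρ p ≥ 0`; completing the square
reduces the claim to two polynomial inequalities in `(ρ, p)`:
* for `ρ ≤ 1` the linear coefficient has the good sign and the constant term (the value at `w = 0`)
  is nonnegative, by the weighted AM–GM bound `ρ ≤ ρ^θ (θ + (1 - θ) ρ)`;
* for `ρ ≥ 1` the discriminant is nonnegative: as a function of `ρ` it vanishes at `1` and its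
  derivative is a positive multiple of `ρ^(2θ+1) - (2θ+1)ρ + 2θ ≥ 0` (Bernoulli).
-/

open Real Set

theorem le_rpow_mul_add {θ y : ℝ} (hθ0 : 0 ≤ θ) (hθ1 : θ ≤ 1) (hy : 0 ≤ y) :
    y ≤ y^θ * (θ + (1-θ)*y) := by
  have hamgm := geom_mean_le_arith_mean2_weighted hθ0 (sub_nonneg.2 hθ1) zero_le_one hy
    (add_sub_cancel θ 1)
  rw [one_rpow, one_mul, mul_one] at hamgm
  calc y = y^θ * y^(1-θ) := by rw [← rpow_add' hy (by simp), add_sub_cancel, rpow_one]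
    _ ≤ y^θ * (θ + (1-θ)*y) := mul_le_mul_of_nonneg_left hamgm (rpow_nonneg hy θ)

theorem rpow_eq_mul_rpow_pow {x θ a : ℝ} (hx : 0 ≤ x) (hθ : 0 ≤ θ) (n : ℕ)
    (ha : a = n*θ + 1) : x^a = x * (x^θ)^n := by
  rw [ha, rpow_add' hx (by positivity), rpow_one, mul_comm (n:ℝ), rpow_mul_natCast hx, mul_comm]

noncomputable section

namespace G₁

variable (θ y p u w : ℝ)

/-- `g₁` at `ρ̄ = 1`, with `γ = 2θ + 1` and `p` standing for `ρ^θ` (here `ρ = y`, `v = u`). -/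
def normalized : ℝ :=
  y*p^3/((2*θ+1)*(2*θ)) + y*p^2*u/(2*θ+1) + y*p*u^2/2 - (u - p)/(2*θ+1) - y*p/(2*θ)

def linCoeff : ℝ := (3*θ+1)*y*p^2 - (2*θ+1)*y*p - θ

def constCoeff : ℝ :=
  y*p*((5*θ+1)*p^2 - 2*(3*θ+1)*p + (2*θ+1)*(1-θ)) + 2*θ*(1 - (1-θ)*p)

/-- With `q = p^2 y = y^(2θ+1)`, this is the discriminant of the completed square up to the
factor `θ` (`mul_constCoeff_sub_linCoeff_sq`). -/
def disc (q : ℝ) : ℝ := (θ+1)*q^2 - (2*θ+1)^2*q*y + 4*θ*(θ+1)*q - θ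

variable {θ y p u w}

theorem eq_mul_normalized {γ ρb : ℝ} (hγ : γ = 2*θ+1) (hθ : 0 < θ) (hρb : 0 < ρb) (hy : 0 ≤ y) :
    (ρb*y) ^ (γ+θ) / (γ*(γ-1)) + (ρb*y) ^ γ * (ρb^θ * u) / γ + (ρb*y) ^ (θ+1) * (ρb^θ * u)^2 / 2
      - (ρb ^ γ / γ) * (ρb^θ * u - (ρb*y) ^ θ) - (ρb ^ (γ-1)/(γ-1)) * (ρb*y) ^ (θ+1)
      = ρb * (ρb^θ)^3 * normalized θ y (y^θ) u := by
  have hρ : 0 ≤ ρb*y := by positivity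
  have hsb : 0 < ρb^θ := by positivity
  rw [rpow_eq_mul_rpow_pow (a := γ+θ) hρ hθ.le 3 (by rw [hγ]; push_cast; ring),
    rpow_eq_mul_rpow_pow (a := γ) hρ hθ.le 2 (by rw [hγ]; push_cast; ring),
    rpow_eq_mul_rpow_pow (a := θ+1) hρ hθ.le 1 (by push_cast; ring),
    rpow_eq_mul_rpow_pow (a := γ) hρb.le hθ.le 2 (by rw [hγ]; push_cast; ring),
    show γ - 1 = θ*(2:ℕ) by rw [hγ]; push_cast; ring, rpow_mul_natCast hρb.le,
    mul_rpow hρb.le hy, hγ]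
  unfold normalized
  field_simp
  ring

theorem normalized_completeSquare (hθ : 0 < θ) :
    2*θ^2*(2*θ+1) * normalized θ y p ((p-1)/θ - w)
      = θ^2*(2*θ+1)*y*p*w^2 - 2*θ*linCoeff θ y p*w + constCoeff θ y p := by
  have : 2*θ+1 ≠ 0 := by positivity
  unfold normalized linCoeff constCoeff
  field_simp
  ring

theorem mul_constCoeff_sub_linCoeff_sq :
    (2*θ+1)*y*p*constCoeff θ y p - linCoeff θ y p^2 = θ * disc θ y (p^2*y) := by
  unfold constCoeff linCoeff disc; ring

theorem linCoeff_nonpos (hθ : 0 ≤ θ) (hy0 : 0 ≤ y) (hy1 : y ≤ 1) (hp0 : 0 ≤ p) (hp1 : p ≤ 1) :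
    linCoeff θ y p ≤ 0 := by
  have : y*p*((3*θ+1)*p - (2*θ+1)) ≤ y*p*(θ*p) :=
    mul_le_mul_of_nonneg_left (by nlinarith) (by positivity)
  have : y*p^2 ≤ 1 := by nlinarith [mul_le_one₀ hy1 (sq_nonneg p) (pow_le_one₀ hp0 hp1 (n := 2))]
  unfold linCoeff; nlinarith

theorem constCoeff_nonneg (hθ0 : 0 < θ) (hθ1 : θ ≤ 1) (hy : 0 ≤ y) (hp0 : 0 ≤ p) (hp1 : p ≤ 1)
    (hamgm : y ≤ p*(θ + (1-θ)*y)) :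
    0 ≤ constCoeff θ y p ∧ (constCoeff θ y p = 0 → y = 1 ∧ p = 1) := by
  set Q := (5*θ+1)*p^2 - 2*(3*θ+1)*p + (2*θ+1)*(1-θ)
  set a := 1 - (1-θ)*p
  have ha : θ ≤ a := by nlinarith
  rcases le_or_gt 0 Q with hQ | hQ
  · have : 0 < constCoeff θ y p := by
      unfold constCoeff; nlinarith [mul_nonneg (mul_nonneg hy hp0) hQ]
    exact ⟨this.le, fun h => absurd h this.ne'⟩
  -- for `Q < 0` the worst case is the largest `y` allowed by `hamgm`
  have hR : 0 < (5*θ+1)*p^2 + 4*θ*p + 2 := by positivity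
  have hEa : θ*((1-p)^2*((5*θ+1)*p^2 + 4*θ*p + 2)) ≤ constCoeff θ y p * a := by
    have : constCoeff θ y p * a
        = θ*((1-p)^2*((5*θ+1)*p^2 + 4*θ*p + 2)) + p*Q*(y*a - θ*p) := by
      unfold constCoeff; ring
    rw [this]; nlinarith [mul_nonneg hp0 (neg_nonneg.2 hQ.le)]
  have hE : 0 ≤ constCoeff θ y p := by
    have := mul_nonneg hθ0.le (mul_nonneg (sq_nonneg (1-p)) hR.le)
    nlinarith
  refine ⟨hE, fun hE0 => ?_⟩
  have hp : p = 1 := by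
    by_contra hne
    have : 0 < (1-p)^2 := pow_pos (sub_pos.2 (lt_of_le_of_ne hp1 hne)) 2
    rw [hE0, zero_mul] at hEa
    nlinarith [mul_pos hθ0 (mul_pos this hR)]
  subst hp
  refine ⟨?_, rfl⟩
  unfold constCoeff at hE0
  nlinarith

theorem normalized_nonneg_of_le_one (hθ0 : 0 < θ) (hθ1 : θ ≤ 1) (hy0 : 0 ≤ y) (hy1 : y ≤ 1)
    (hp0 : 0 ≤ p) (hp1 : p ≤ 1) (hamgm : y ≤ p*(θ + (1-θ)*y)) (hw : 0 ≤ w) :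
    0 ≤ normalized θ y p ((p-1)/θ - w)
      ∧ (normalized θ y p ((p-1)/θ - w) = 0 → y = 1 ∧ w = 0) := by
  have hsq := normalized_completeSquare (y := y) (p := p) (w := w) hθ0
  have hD := linCoeff_nonpos hθ0.le hy0 hy1 hp0 hp1
  obtain ⟨hE, hE0⟩ := constCoeff_nonneg hθ0 hθ1 hy0 hp0 hp1 hamgm
  have hc : 0 < 2*θ^2*(2*θ+1) := by positivity
  have hsqw : 0 ≤ θ^2*(2*θ+1)*y*p*w^2 := by positivity
  have hlin : 0 ≤ -(2*θ*linCoeff θ y p*w) := by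
    have := mul_nonneg (mul_nonneg hθ0.le (neg_nonneg.2 hD)) hw
    linarith
  refine ⟨(mul_nonneg_iff_of_pos_left hc).1 (by linarith), fun hg => ?_⟩
  rw [hg, mul_zero] at hsq
  obtain ⟨rfl, rfl⟩ := hE0 (by linarith)
  refine ⟨rfl, ?_⟩
  have : θ^2*(2*θ+1)*w^2 = 0 := by linarith
  simpa [hθ0.ne', (by positivity : 2*θ+1 ≠ 0)] using this

theorem normalized_nonneg_of_disc (hθ : 0 < θ) (hy : 0 < y) (hp : 0 < p)
    (hdisc : 0 < disc θ y (p^2*y) ∨ (y = 1 ∧ p = 1)) :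
    0 ≤ normalized θ y p ((p-1)/θ - w)
      ∧ (normalized θ y p ((p-1)/θ - w) = 0 → y = 1 ∧ w = 0) := by
  have hsq := normalized_completeSquare (y := y) (p := p) (w := w) hθ
  have hc : 0 < 2*θ^2*(2*θ+1) := by positivity
  rcases hdisc with hdisc | ⟨rfl, rfl⟩
  · set A := θ^2*(2*θ+1)*y*p
    have hA : 0 < A := by positivity
    have hsum : 4*A*(2*θ^2*(2*θ+1) * normalized θ y p ((p-1)/θ - w))
        = (2*A*w - 2*θ*linCoeff θ y p)^2 + 4*θ^3*disc θ y (p^2*y) := by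
      rw [hsq]
      linear_combination 4*θ^2 * mul_constCoeff_sub_linCoeff_sq (θ := θ) (y := y) (p := p)
    have : 0 < normalized θ y p ((p-1)/θ - w) := by
      have h4A : 0 < 4*A := by positivity
      refine (mul_pos_iff_of_pos_left hc).1 ((mul_pos_iff_of_pos_left h4A).1 ?_)
      rw [hsum]; positivity
    exact ⟨this.le, fun h => absurd h this.ne'⟩
  · have hlin : linCoeff θ 1 1 = 0 := by unfold linCoeff; ring
    have hconst : constCoeff θ 1 1 = 0 := by unfold constCoeff; ring
    rw [hlin, hconst, mul_zero, zero_mul, sub_zero, add_zero] at hsq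
    refine ⟨(mul_nonneg_iff_of_pos_left hc).1 (by rw [hsq]; positivity), fun hg => ⟨rfl, ?_⟩⟩
    rw [hg] at hsq
    have : θ^2*(2*θ+1)*w^2 = 0 := by linarith
    simpa [hθ.ne', (by positivity : 2*θ+1 ≠ 0)] using this

theorem disc_rpow_pos (hθ : 0 < θ) (hy : 1 < y) : 0 < disc θ y (y^(2*θ+1)) := by
  set f : ℝ → ℝ := fun x => disc θ x (x^(2*θ+1))
  have hderiv : ∀ x, 0 < x →
      HasDerivAt f (2*(θ+1)*(2*θ+1)*x^(2*θ)*(x^(2*θ+1) - (2*θ+1)*x + 2*θ)) x := by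
    intro x hx
    have hq : HasDerivAt (fun x => x^(2*θ+1)) ((2*θ+1)*x^(2*θ)) x := by
      simpa using Real.hasDerivAt_rpow_const (p := 2*θ+1) (Or.inl hx.ne')
    refine (((((hq.fun_pow 2).const_mul (θ+1)).sub ((hq.const_mul ((2*θ+1)^2)).fun_mul
      (hasDerivAt_id x))).add (hq.const_mul (4*θ*(θ+1)))).sub_const θ).congr_deriv ?_
    rw [rpow_add_one hx.ne']
    simp only [id]
    push_cast
    ring
  have hmono : StrictMonoOn f (Ici 1) := by
    refine strictMonoOn_of_hasDerivWithinAt_pos (convex_Ici 1)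
      (fun x hx => (hderiv x (by linarith [mem_Ici.1 hx])).continuousAt.continuousWithinAt)
      (fun x hx => (hderiv x ?_).hasDerivWithinAt) fun x hx => ?_
    all_goals rw [interior_Ici] at hx
    · linarith [mem_Ioi.1 hx]
    have hx0 : 0 < x := by linarith [mem_Ioi.1 hx]
    have hb := one_add_mul_self_lt_rpow_one_add (s := x - 1) (by linarith [mem_Ioi.1 hx])
      (by linarith [mem_Ioi.1 hx]) (p := 2*θ+1) (by linarith)
    rw [add_sub_cancel] at hb
    have := rpow_pos_of_pos hx0 (2*θ)
    have : 0 < x^(2*θ+1) - (2*θ+1)*x + 2*θ := by linarith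
    positivity
  have h1 : f 1 = 0 := by simp only [f, disc, one_rpow]; ring
  simpa [h1] using hmono self_mem_Ici (mem_Ici.2 hy.le) hy

theorem normalized_rpow_nonneg (hθ0 : 0 < θ) (hθ1 : θ ≤ 1) (hy : 0 ≤ y) (hw : 0 ≤ w) :
    0 ≤ normalized θ y (y^θ) ((y^θ-1)/θ - w)
      ∧ (normalized θ y (y^θ) ((y^θ-1)/θ - w) = 0 → y = 1 ∧ w = 0) := by
  rcases le_total y 1 with hy1 | hy1
  · exact normalized_nonneg_of_le_one hθ0 hθ1 hy hy1 (rpow_nonneg hy θ)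
      (rpow_le_one hy hy1 hθ0.le) (le_rpow_mul_add hθ0.le hθ1 hy) hw
  refine normalized_nonneg_of_disc hθ0 (by linarith) (by positivity) ?_
  rcases hy1.eq_or_lt with rfl | hy1
  · exact Or.inr ⟨rfl, one_rpow θ⟩
  left
  have hq : (y^θ)^2*y = y^(2*θ+1) := by
    rw [← rpow_mul_natCast (by linarith), rpow_add_one (by positivity)]; push_cast; ring_nf
  rw [hq]
  exact disc_rpow_pos hθ0 hy1

end G₁

end

theorem stmt_15 (γ θ ρb ρ v : ℝ) (hγ1 : 1 < γ) (hγ2 : γ ≤ 5/3)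
    (hθ : θ = (γ-1)/2) (hρb : 0 < ρb) (hρ : 0 ≤ ρ)
    (hz : v - ρ ^ θ / θ ≤ -(ρb ^ θ) / θ) :
    0 ≤ ρ ^ (γ+θ) / (γ*(γ-1)) + ρ ^ γ * v / γ + ρ ^ (θ+1) * v^2 / 2
      - (ρb ^ γ / γ) * (v - ρ ^ θ) - (ρb ^ (γ-1)/(γ-1)) * ρ ^ (θ+1)
    ∧ (ρ ^ (γ+θ) / (γ*(γ-1)) + ρ ^ γ * v / γ + ρ ^ (θ+1) * v^2 / 2
      - (ρb ^ γ / γ) * (v - ρ ^ θ) - (ρb ^ (γ-1)/(γ-1)) * ρ ^ (θ+1) = 0 →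
      ρ = ρb ∧ v - ρ ^ θ / θ = -(ρb ^ θ) / θ) := by
  have hθ0 : 0 < θ := by linarith
  have hγ : γ = 2*θ+1 := by linarith
  obtain ⟨y, hy, rfl⟩ : ∃ y, 0 ≤ y ∧ ρ = ρb * y := ⟨ρ/ρb, by positivity, by field_simp⟩
  have hsb : 0 < ρb^θ := by positivity
  obtain ⟨w, rfl⟩ : ∃ w, v = ρb^θ * ((y^θ - 1)/θ - w) :=
    ⟨(y^θ - 1)/θ - v/ρb^θ, by field_simp; ring⟩
  have hz_eq : ρb^θ * ((y^θ - 1)/θ - w) - (ρb*y)^θ/θ = -(ρb^θ)/θ - ρb^θ * w := by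
    rw [mul_rpow hρb.le hy]; field_simp; ring
  have hw : 0 ≤ w := by
    rw [hz_eq] at hz
    exact nonneg_of_mul_nonneg_right (by linarith) hsb
  rw [G₁.eq_mul_normalized hγ hθ0 hρb hy, hz_eq]
  obtain ⟨hnonneg, heq⟩ := G₁.normalized_rpow_nonneg hθ0 (by linarith) hy hw
  refine ⟨mul_nonneg (by positivity) hnonneg, fun h => ?_⟩
  obtain ⟨rfl, rfl⟩ := heq (by simpa [hρb.ne', hsb.ne'] using h)
  simp
end

section
/- Let γ with 1 < γ ≤ 5/3, θ = (γ−1)/2, ρ̄ > 0. If ρ ≥ 0, v real, and w = v + ρ^θ/θ ≥ ρ̄^θ/θ, then g₂(ρ,v) := −(ρ̄^γ/γ)·(v + ρ^θ) − ρ^(γ+θ)/(γ(γ−1)) + ρ^γ·v/γ − ρ^(θ+1)·v²/2 + (ρ̄^(γ−1)/(γ−1))·ρ^(θ+1) ≤ 0, with equality only if ρ = ρ̄ and w = ρ̄^θ/θ. -/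
open Real Set

private lemma bern_lt {u μ : ℝ} (hu : 0 < u) (hu1 : u ≠ 1) (h0 : 0 < μ) (h1 : μ < 1) :
    u ^ μ < 1 + μ * (u - 1) := by
  have hz : 0 < u ^ μ := Real.rpow_pos_of_pos hu μ
  have hzu : (u ^ μ) ^ (1/μ) = u := by
    rw [← Real.rpow_mul hu.le]
    rw [show μ * (1/μ) = 1 by field_simp, Real.rpow_one]
  have hz1 : u ^ μ - 1 ≠ 0 := by
    intro h
    apply hu1
    have : u ^ μ = 1 := by linarith [sub_eq_zero.mp h]
    rw [← hzu, this, Real.one_rpow]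
  have hb := one_add_mul_self_lt_rpow_one_add (s := u ^ μ - 1) (by linarith) hz1
      (p := 1/μ) (by rw [lt_div_iff₀ h0]; linarith)
  rw [show 1 + (u ^ μ - 1) = u ^ μ by ring, hzu] at hb
  have h2 := mul_lt_mul_of_pos_left hb h0
  have h3 : μ * (1/μ * (u ^ μ - 1)) = u ^ μ - 1 := by field_simp
  nlinarith [h2, h3]

private lemma bern_le {u μ : ℝ} (hu : 0 ≤ u) (h0 : 0 < μ) (h1 : μ < 1) :
    u ^ μ ≤ 1 + μ * (u - 1) := by
  rcases eq_or_lt_of_le hu with h | h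
  · rw [← h, Real.zero_rpow h0.ne']; nlinarith
  · rcases eq_or_ne u 1 with h2 | h2
    · rw [h2, Real.one_rpow]; nlinarith
    · exact (bern_lt h h2 h0 h1).le

private lemma qneg {θ : ℝ} (hθ : 0 < θ) {s : ℝ} (hs : 1 < s) :
    -(θ+1)*s^(4*θ+2) + (2*θ+1)^2*s^(2*θ+2) - 4*θ*(θ+1)*s^(2*θ+1) + θ < 0 := by
  set F : ℝ → ℝ := fun z => -(θ+1)*z^(4*θ+2) + (2*θ+1)^2*z^(2*θ+2) - 4*θ*(θ+1)*z^(2*θ+1) + θ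
    with hF
  have c1 : ∀ p : ℝ, ContinuousOn (fun z : ℝ => z ^ p) (Set.Ici 1) := fun p =>
    continuousOn_id.rpow_const (fun x hx => Or.inl (by
      have : (1:ℝ) ≤ x := hx
      simp only [id]
      linarith))
  have hcont : ContinuousOn F (Set.Ici 1) := by
    apply ContinuousOn.add
    apply ContinuousOn.sub
    apply ContinuousOn.add
    · exact continuousOn_const.mul (c1 _)
    · exact continuousOn_const.mul (c1 _)
    · exact continuousOn_const.mul (c1 _)
    · exact continuousOn_const
  have hderiv : ∀ z ∈ interior (Set.Ici (1:ℝ)), deriv F z < 0 := by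
    rw [interior_Ici]
    intro z hz
    have hz1 : (1:ℝ) < z := hz
    have hz0 : (0:ℝ) < z := by linarith
    have hD : HasDerivAt F (-(θ+1)*((4*θ+2)*z^(4*θ+2-1)) + (2*θ+1)^2*((2*θ+2)*z^(2*θ+2-1))
        - 4*θ*(θ+1)*((2*θ+1)*z^(2*θ+1-1))) z := by
      have d1 := (Real.hasDerivAt_rpow_const (x := z) (p := 4*θ+2) (Or.inl hz0.ne')).const_mul (-(θ+1))
      have d2 := (Real.hasDerivAt_rpow_const (x := z) (p := 2*θ+2) (Or.inl hz0.ne')).const_mul ((2*θ+1)^2)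
      have d3 := (Real.hasDerivAt_rpow_const (x := z) (p := 2*θ+1) (Or.inl hz0.ne')).const_mul (4*θ*(θ+1))
      exact ((d1.add d2).sub d3).add_const θ
    rw [hD.deriv]
    have e1 : z^(4*θ+2-1) = z^(2*θ)*(z^(2*θ)*z) := by
      rw [show 4*θ+2-1 = 2*θ+(2*θ+1) by ring, Real.rpow_add hz0, Real.rpow_add hz0, Real.rpow_one]
    have e2 : z^(2*θ+2-1) = z^(2*θ)*z := by
      rw [show 2*θ+2-1 = 2*θ+1 by ring, Real.rpow_add hz0, Real.rpow_one]
    have e3 : z^(2*θ+1-1) = z^(2*θ) := by rw [show 2*θ+1-1 = 2*θ by ring]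
    rw [e1, e2, e3]
    have hu : 0 < z^(2*θ) := Real.rpow_pos_of_pos hz0 _
    have hBern : 1 + (2*θ+1)*(z-1) < z^(2*θ)*z := by
      have hb := one_add_mul_self_lt_rpow_one_add (s := z-1) (by linarith)
        (sub_ne_zero.mpr hz1.ne') (p := 2*θ+1) (by linarith)
      rw [show (1:ℝ)+(z-1) = z by ring] at hb
      calc 1 + (2*θ+1)*(z-1) < z ^ (2*θ+1) := hb
        _ = z^(2*θ)*z := by rw [Real.rpow_add hz0, Real.rpow_one]
    have hk := mul_lt_mul_of_pos_left hBern
      (show (0:ℝ) < 2*(θ+1)*((2*θ+1)*z^(2*θ)) by positivity)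
    nlinarith [hk]
  have hanti := strictAntiOn_of_deriv_neg (convex_Ici (1:ℝ)) hcont hderiv
  have hlt := hanti (Set.self_mem_Ici) (Set.mem_Ici.mpr hs.le) hs
  have hF1 : F 1 = 0 := by
    simp only [hF, Real.one_rpow]
    ring
  rw [hF1] at hlt
  simpa [hF] using hlt

set_option maxHeartbeats 2000000 in
theorem stmt_16 (γ θ ρb ρ v : ℝ) (hγ1 : 1 < γ) (hγ2 : γ ≤ 5/3)
    (hθ : θ = (γ-1)/2) (hρb : 0 < ρb) (hρ : 0 ≤ ρ)
    (hw : ρb ^ θ / θ ≤ v + ρ ^ θ / θ) :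
    -(ρb ^ γ / γ) * (v + ρ ^ θ) - ρ ^ (γ+θ) / (γ*(γ-1)) + ρ ^ γ * v / γ
      - ρ ^ (θ+1) * v^2 / 2 + (ρb ^ (γ-1)/(γ-1)) * ρ ^ (θ+1) ≤ 0
    ∧ (-(ρb ^ γ / γ) * (v + ρ ^ θ) - ρ ^ (γ+θ) / (γ*(γ-1)) + ρ ^ γ * v / γ
      - ρ ^ (θ+1) * v^2 / 2 + (ρb ^ (γ-1)/(γ-1)) * ρ ^ (θ+1) = 0 →
      ρ = ρb ∧ v + ρ ^ θ / θ = ρb ^ θ / θ) := by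
  have hθpos : 0 < θ := by rw [hθ]; linarith
  have hθ3 : θ ≤ 1/3 := by rw [hθ]; linarith
  have hγeq : γ = 2*θ+1 := by rw [hθ]; ring
  have h2θ1 : (0:ℝ) < 2*θ+1 := by linarith
  have hb : 0 < ρb ^ θ := Real.rpow_pos_of_pos hρb θ
  set A := -(ρb ^ γ / γ) * (v + ρ ^ θ) - ρ ^ (γ+θ) / (γ*(γ-1)) + ρ ^ γ * v / γ
      - ρ ^ (θ+1) * v^2 / 2 + (ρb ^ (γ-1)/(γ-1)) * ρ ^ (θ+1) with hAdef
  rw [hγeq] at hAdef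
  rcases eq_or_lt_of_le hρ with h0 | hρ0
  · -- ρ = 0
    rw [← h0] at hAdef hw
    rw [Real.zero_rpow hθpos.ne'] at hw
    rw [Real.zero_rpow hθpos.ne',
        Real.zero_rpow (show 2*θ+1+θ ≠ 0 from (by linarith : (0:ℝ) < 2*θ+1+θ).ne'),
        Real.zero_rpow (show 2*θ+1 ≠ 0 from h2θ1.ne'),
        Real.zero_rpow (show θ+1 ≠ 0 from (by linarith : (0:ℝ) < θ+1).ne')] at hAdef
    rw [zero_div, add_zero] at hw
    have hv : 0 < v := by
      have hd := div_pos hb hθpos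
      linarith
    have hA : A < 0 := by
      have hA2 : A = -(ρb^(2*θ+1)/(2*θ+1)*v) := by rw [hAdef]; ring
      rw [hA2]
      have : 0 < ρb^(2*θ+1)/(2*θ+1)*v :=
        mul_pos (div_pos (Real.rpow_pos_of_pos hρb _) h2θ1) hv
      linarith
    exact ⟨hA.le, fun h => absurd h hA.ne⟩
  · -- 0 < ρ
    have e1 : ρ ^ (2*θ+1+θ) = ρ^θ*(ρ^θ*(ρ^θ*ρ)) := by
      rw [show 2*θ+1+θ = θ+(θ+(θ+1)) by ring, Real.rpow_add hρ0, Real.rpow_add hρ0,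
        Real.rpow_add hρ0, Real.rpow_one]
    have e2 : ρ ^ (2*θ+1) = ρ^θ*(ρ^θ*ρ) := by
      rw [show 2*θ+1 = θ+(θ+1) by ring, Real.rpow_add hρ0, Real.rpow_add hρ0, Real.rpow_one]
    have e3 : ρ ^ (θ+1) = ρ^θ*ρ := by rw [Real.rpow_add hρ0, Real.rpow_one]
    have e4 : ρb ^ (2*θ+1) = ρb^θ*(ρb^θ*ρb) := by
      rw [show 2*θ+1 = θ+(θ+1) by ring, Real.rpow_add hρb, Real.rpow_add hρb, Real.rpow_one]
    have e5 : ρb ^ (2*θ+1-1) = ρb^θ*ρb^θ := by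
      rw [show 2*θ+1-1 = θ+θ by ring, Real.rpow_add hρb]
    rw [e1, e2, e3, e4, e5] at hAdef
    rw [show 2*θ+1-1 = 2*θ by ring] at hAdef
    set t := ρ / ρb with htdef
    have htpos : 0 < t := by rw [htdef]; exact div_pos hρ0 hρb
    have htx : ρ = t*ρb := by rw [htdef]; field_simp
    have hta2 : ρ^θ = t^θ*ρb^θ := by
      rw [htx, Real.mul_rpow htpos.le hρb.le]
    rw [hta2, htx] at hAdef
    have hT1pos : 0 < t^θ := Real.rpow_pos_of_pos htpos θ
    have hW : 0 ≤ θ*v - ρb^θ + t^θ*ρb^θ := by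
      have h1 := mul_le_mul_of_nonneg_right hw hθpos.le
      rw [div_mul_cancel₀ _ hθpos.ne', add_mul, div_mul_cancel₀ _ hθpos.ne'] at h1
      rw [hta2] at h1
      linarith
    rcases lt_trichotomy t 1 with ht1 | ht1 | ht1
    · -- t < 1
      have hult : t^(θ+1) < 1 := Real.rpow_lt_one htpos.le ht1 (by linarith)
      have hu : t^(θ+1) = t^θ*t := by rw [Real.rpow_add htpos, Real.rpow_one]
      have hgm : (t^(θ+1))^(θ/(θ+1)) = t^θ := by
        rw [← Real.rpow_mul htpos.le, show (θ+1)*(θ/(θ+1)) = θ by field_simp]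
      have hb1 := bern_lt (u := t^(θ+1)) (μ := θ/(θ+1))
        (Real.rpow_pos_of_pos htpos (θ+1)) hult.ne
        (div_pos hθpos (by linarith)) (by rw [div_lt_one (by linarith : (0:ℝ) < θ+1)]; linarith)
      rw [hgm, hu] at hb1
      have B1 : (θ+1)*t^θ < 1 + θ*(t^θ*t) := by
        have h2 := mul_lt_mul_of_pos_left hb1 (show (0:ℝ) < θ+1 by linarith)
        have h3 : (θ+1)*(θ/(θ+1)*(t^θ*t-1)) = θ*(t^θ*t-1) := by field_simp
        nlinarith [h2, h3]
      have hu5 : t^(2*θ+1) = t^θ*(t^θ*t) := by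
        rw [show 2*θ+1 = θ+(θ+1) by ring, Real.rpow_add htpos, Real.rpow_add htpos,
          Real.rpow_one]
      have hgm5 : (t^(2*θ+1))^((θ+1)/(2*θ+1)) = t^θ*t := by
        rw [← Real.rpow_mul htpos.le, show (2*θ+1)*((θ+1)/(2*θ+1)) = θ+1 by field_simp,
          Real.rpow_add htpos, Real.rpow_one]
      have hb5 := bern_le (u := t^(2*θ+1)) (μ := (θ+1)/(2*θ+1))
        (Real.rpow_pos_of_pos htpos (2*θ+1)).le
        (div_pos (by linarith : (0:ℝ) < θ+1) h2θ1) (by rw [div_lt_one h2θ1]; linarith)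
      rw [hgm5, hu5] at hb5
      have B5 : (2*θ+1)*(t^θ*t) ≤ θ + (θ+1)*(t^θ*(t^θ*t)) := by
        have h2 := mul_le_mul_of_nonneg_left hb5 h2θ1.le
        have h3 : (2*θ+1)*((θ+1)/(2*θ+1)*(t^θ*(t^θ*t)-1)) = (θ+1)*(t^θ*(t^θ*t)-1) := by
          field_simp
        nlinarith [h2, h3]
      have hσ1 : 0 < 1 + θ*(t^θ*t) - (θ+1)*t^θ := by linarith
      have hσ5 : 0 ≤ θ*t^θ + (θ+1)*(t^θ*(t^θ*(t^θ*t))) - (2*θ+1)*(t^θ*(t^θ*t)) := by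
        nlinarith [mul_le_mul_of_nonneg_left B5 hT1pos.le]
      have hT1le : t^θ ≤ 1 := Real.rpow_le_one htpos.le ht1.le hθpos.le
      have p1 : t^θ*(t^θ*t) ≤ t^θ*t := by
        have := mul_le_mul_of_nonneg_right hT1le (mul_nonneg hT1pos.le htpos.le)
        linarith
      have p2 : t^θ*(t^θ*t) ≤ 1 := by
        nlinarith [hT1le, hT1pos.le, ht1.le, htpos.le, mul_nonneg hT1pos.le htpos.le]
      have hφ : (3*θ+1)*(t^θ*(t^θ*t)) - (2*θ+1)*(t^θ*t) - θ ≤ 0 := by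
        nlinarith [p1, p2, hθpos.le, h2θ1.le]
      have hbb : 0 < ρb^θ*(ρb^θ*(ρb^θ*ρb)) := mul_pos hb (mul_pos hb (mul_pos hb hρb))
      have n1 : 0 < 2*θ*((ρb^θ*(ρb^θ*(ρb^θ*ρb)))*(1 + θ*(t^θ*t) - (θ+1)*t^θ)) :=
        mul_pos (by linarith) (mul_pos hbb hσ1)
      have c4 : (0:ℝ) ≤ 1+θ-4*θ^2 := by nlinarith
      have n4 : 0 ≤ (1+θ-4*θ^2)*((ρb^θ*(ρb^θ*(ρb^θ*ρb)))*(t^θ*t*(1-t^θ)^2)) :=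
        mul_nonneg c4 (mul_nonneg hbb.le
          (mul_nonneg (mul_nonneg hT1pos.le htpos.le) (sq_nonneg _)))
      have n5 : 0 ≤ 4*θ*((ρb^θ*(ρb^θ*(ρb^θ*ρb)))*(θ*t^θ + (θ+1)*(t^θ*(t^θ*(t^θ*t)))
          - (2*θ+1)*(t^θ*(t^θ*t)))) :=
        mul_nonneg (by linarith) (mul_nonneg hbb.le hσ5)
      have hYφ : (ρb^θ*(ρb^θ*ρb))*((3*θ+1)*(t^θ*(t^θ*t)) - (2*θ+1)*(t^θ*t) - θ) ≤ 0 :=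
        mul_nonpos_of_nonneg_of_nonpos (mul_pos hb (mul_pos hb hρb)).le hφ
      have nW : (θ*v - ρb^θ + t^θ*ρb^θ)*((ρb^θ*(ρb^θ*ρb))*((3*θ+1)*(t^θ*(t^θ*t))
          - (2*θ+1)*(t^θ*t) - θ)) ≤ 0 :=
        mul_nonpos_of_nonneg_of_nonpos hW hYφ
      have nW2 : 0 ≤ (2*θ+1)*((t^θ*(t*(ρb^θ*ρb)))*(θ*v - ρb^θ + t^θ*ρb^θ)^2) :=
        mul_nonneg h2θ1.le (mul_nonneg
          (mul_nonneg hT1pos.le (mul_nonneg htpos.le (mul_pos hb hρb).le)) (sq_nonneg _))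
      have key1 : 2*θ^2*(2*θ+1)*A =
          -(2*θ*((ρb^θ*(ρb^θ*(ρb^θ*ρb)))*(1 + θ*(t^θ*t) - (θ+1)*t^θ)))
          - (1+θ-4*θ^2)*((ρb^θ*(ρb^θ*(ρb^θ*ρb)))*(t^θ*t*(1-t^θ)^2))
          - 4*θ*((ρb^θ*(ρb^θ*(ρb^θ*ρb)))*(θ*t^θ + (θ+1)*(t^θ*(t^θ*(t^θ*t)))
              - (2*θ+1)*(t^θ*(t^θ*t))))
          + 2*((θ*v - ρb^θ + t^θ*ρb^θ)*((ρb^θ*(ρb^θ*ρb))*((3*θ+1)*(t^θ*(t^θ*t))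
              - (2*θ+1)*(t^θ*t) - θ)))
          - (2*θ+1)*((t^θ*(t*(ρb^θ*ρb)))*(θ*v - ρb^θ + t^θ*ρb^θ)^2) := by
        rw [hAdef]
        field_simp
        ring
      have hcA : 2*θ^2*(2*θ+1)*A < 0 := by
        rw [key1]; linarith
      have hA : A < 0 := by
        by_contra hc
        push_neg at hc
        have := mul_nonneg (show (0:ℝ) ≤ 2*θ^2*(2*θ+1) by positivity) hc
        linarith
      exact ⟨hA.le, fun h => absurd h hA.ne⟩
    · -- t = 1
      rw [ht1, Real.one_rpow] at hAdef
      have hρρb : ρ = ρb := by rw [htx, ht1, one_mul]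
      have keyE : A = -(ρb^θ*ρb*v^2/2) := by
        rw [hAdef]
        field_simp
        ring
      constructor
      · rw [keyE]
        have : 0 ≤ ρb^θ*ρb*v^2/2 :=
          div_nonneg (mul_nonneg (mul_pos hb hρb).le (sq_nonneg v)) (by norm_num)
        linarith
      · intro he
        rw [keyE] at he
        have h1 : v^2 ≤ 0 := by nlinarith [he, mul_pos hb hρb]
        have hv : v = 0 := (pow_eq_zero_iff two_ne_zero).mp (le_antisymm h1 (sq_nonneg v))
        exact ⟨hρρb, by rw [hv, zero_add, hρρb]⟩
    · -- 1 < t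
      have hQ := qneg hθpos ht1
      have r1 : t^(4*θ+2) = t^θ*(t^θ*(t^θ*(t^θ*(t*t)))) := by
        rw [show 4*θ+2 = θ+(θ+(θ+(θ+(1+1)))) by ring, Real.rpow_add htpos,
          Real.rpow_add htpos, Real.rpow_add htpos, Real.rpow_add htpos,
          Real.rpow_add htpos, Real.rpow_one]
      have r2 : t^(2*θ+2) = t^θ*(t^θ*(t*t)) := by
        rw [show 2*θ+2 = θ+(θ+(1+1)) by ring, Real.rpow_add htpos, Real.rpow_add htpos,
          Real.rpow_add htpos, Real.rpow_one]
      have r3 : t^(2*θ+1) = t^θ*(t^θ*t) := by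
        rw [show 2*θ+1 = θ+(θ+1) by ring, Real.rpow_add htpos, Real.rpow_add htpos,
          Real.rpow_one]
      rw [r1, r2, r3] at hQ
      have hq2 : (ρb^θ*(ρb^θ*(ρb^θ*(ρb^θ*(ρb*ρb)))))*(-(θ+1)*(t^θ*(t^θ*(t^θ*(t^θ*(t*t)))))
          + (2*θ+1)^2*(t^θ*(t^θ*(t*t))) - 4*θ*(θ+1)*(t^θ*(t^θ*t)) + θ) < 0 :=
        mul_neg_of_pos_of_neg
          (mul_pos hb (mul_pos hb (mul_pos hb (mul_pos hb (mul_pos hρb hρb))))) hQ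
      have hsq : 0 ≤ θ*((2*θ+1)*(t^θ*ρb^θ)*(t*ρb)*v
          - (t^θ*ρb^θ*(t^θ*ρb^θ)*(t*ρb) - ρb^θ*(ρb^θ*ρb)))^2 :=
        mul_nonneg hθpos.le (sq_nonneg _)
      have key2 : 2*θ*(2*θ+1)^2*(t^θ*(t*(ρb^θ*ρb)))*A =
          (ρb^θ*(ρb^θ*(ρb^θ*(ρb^θ*(ρb*ρb)))))*(-(θ+1)*(t^θ*(t^θ*(t^θ*(t^θ*(t*t)))))
            + (2*θ+1)^2*(t^θ*(t^θ*(t*t))) - 4*θ*(θ+1)*(t^θ*(t^θ*t)) + θ)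
          - θ*((2*θ+1)*(t^θ*ρb^θ)*(t*ρb)*v
            - (t^θ*ρb^θ*(t^θ*ρb^θ)*(t*ρb) - ρb^θ*(ρb^θ*ρb)))^2 := by
        rw [hAdef]
        field_simp
        ring
      have hcA : 2*θ*(2*θ+1)^2*(t^θ*(t*(ρb^θ*ρb)))*A < 0 := by
        rw [key2]; linarith
      have hA : A < 0 := by
        by_contra hc
        push_neg at hc
        have hcf : (0:ℝ) ≤ 2*θ*(2*θ+1)^2*(t^θ*(t*(ρb^θ*ρb))) :=
          mul_nonneg (mul_nonneg (by linarith) (sq_nonneg _))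
            (mul_nonneg hT1pos.le (mul_nonneg htpos.le (mul_pos hb hρb).le))
        have := mul_nonneg hcf hc
        linarith
      exact ⟨hA.le, fun h => absurd h hA.ne⟩
end

section
/- Let γ with 1 < γ ≤ 5/3 and θ = (γ−1)/2 ∈ (0, 1/3]. For 1 < γ ≤ 5/3 and 0 ≤ t ≤ 1, with X = t^θ: 4f''(t) ≥ (3γ−1)(γ−1)·t^(θ−1)·(3(5γ−3)X² − 8γX + 3 − γ), where f(t) = (5γ−3)t^(3θ+1) − 2(3γ−1)t^(2θ+1) + γ(3−γ)t^(θ+1) − (3−γ)(γ−1)t^θ + 2(γ−1). -/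
/-! With `θ = (γ-1)/2` the coefficients of `4f''` become polynomials in `γ`, and
`4f''(t)` minus the claimed lower bound collapses to
`(γ-1)²(3-γ) t^(θ-2) ((γ-1)t + 3 - γ)`, which is nonnegative for `1 ≤ γ ≤ 3` and `t > 0`. -/

namespace Real

variable {ι : Type*} (s : Finset ι) (c p : ι → ℝ) {x : ℝ}

theorem hasDerivAt_sum_mul_rpow_const (hx : 0 < x) :
    HasDerivAt (fun y => ∑ i ∈ s, c i * y ^ p i) (∑ i ∈ s, c i * p i * x ^ (p i - 1)) x := by
  refine HasDerivAt.fun_sum fun i _ => ?_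
  simpa only [mul_assoc] using (hasDerivAt_rpow_const (p := p i) (Or.inl hx.ne')).const_mul (c i)

theorem deriv_deriv_sum_mul_rpow_const_add_const (d : ℝ) (hx : 0 < x) :
    deriv (deriv fun y => ∑ i ∈ s, c i * y ^ p i + d) x
      = ∑ i ∈ s, c i * p i * (p i - 1) * x ^ (p i - 2) := by
  have hderiv : deriv (fun y => ∑ i ∈ s, c i * y ^ p i + d)
      =ᶠ[nhds x] fun y => ∑ i ∈ s, (c i * p i) * y ^ (p i - 1) := by
    filter_upwards [isOpen_Ioi.mem_nhds hx] with y hy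
    rw [deriv_add_const]
    exact (hasDerivAt_sum_mul_rpow_const s c p hy).deriv
  rw [hderiv.deriv_eq, (hasDerivAt_sum_mul_rpow_const s _ _ hx).deriv]
  simp only [sub_sub, one_add_one_eq_two]

end Real

theorem four_mul_deriv_deriv_eq {γ θ t : ℝ} (hθ : θ = (γ-1)/2) (ht : 0 < t) :
    4 * deriv (deriv fun t : ℝ => (5*γ-3) * t ^ (3*θ+1) - 2*(3*γ-1) * t ^ (2*θ+1)
      + γ*(3-γ) * t ^ (θ+1) - (3-γ)*(γ-1) * t ^ θ + 2*(γ-1)) t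
      = 3*(5*γ-3)*(3*γ-1)*(γ-1) * t ^ (3*θ-1) - 8*γ*(γ-1)*(3*γ-1) * t ^ (2*θ-1)
        + γ*(γ-1)*(γ+1)*(3-γ) * t ^ (θ-1) + (γ-1)^2*(3-γ)^2 * t ^ (θ-2) := by
  have hf_sum : (fun t : ℝ => (5*γ-3) * t ^ (3*θ+1) - 2*(3*γ-1) * t ^ (2*θ+1)
      + γ*(3-γ) * t ^ (θ+1) - (3-γ)*(γ-1) * t ^ θ + 2*(γ-1)) = fun y => ∑ i : Fin 4,
      ![5*γ-3, -(2*(3*γ-1)), γ*(3-γ), -((3-γ)*(γ-1))] i * y ^ ![3*θ+1, 2*θ+1, θ+1, θ] i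
        + 2*(γ-1) := by
    funext y
    simp only [Fin.sum_univ_four, Fin.isValue, Matrix.cons_val_zero, Matrix.cons_val_one,
      Matrix.cons_val]
    ring
  rw [hf_sum, Real.deriv_deriv_sum_mul_rpow_const_add_const _ _ _ _ ht]
  simp only [Fin.sum_univ_four, Fin.isValue, Matrix.cons_val_zero, Matrix.cons_val_one,
    Matrix.cons_val]
  rw [show 3*θ+1-2 = 3*θ-1 by ring, show 2*θ+1-2 = 2*θ-1 by ring, show θ+1-2 = θ-1 by ring, hθ]
  ring

theorem stmt_17 (γ θ : ℝ) (hγ1 : 1 < γ) (hγ2 : γ ≤ 5/3) (hθ : θ = (γ-1)/2)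
    (f : ℝ → ℝ)
    (hf : f = fun t : ℝ => (5*γ-3) * t ^ (3*θ+1) - 2*(3*γ-1) * t ^ (2*θ+1)
      + γ*(3-γ) * t ^ (θ+1) - (3-γ)*(γ-1) * t ^ θ + 2*(γ-1)) :
    ∀ t : ℝ, 0 < t → t ≤ 1 →
      (3*γ-1)*(γ-1) * t ^ (θ-1) * (3*(5*γ-3) * (t ^ θ)^2 - 8*γ * t ^ θ + 3 - γ)
        ≤ 4 * deriv (deriv f) t := by
  intro t ht _
  rw [hf, four_mul_deriv_deriv_eq hθ ht]
  have h3 : t ^ (3*θ-1) = (t ^ θ)^2 * t ^ (θ-1) := by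
    rw [sq, ← Real.rpow_add ht, ← Real.rpow_add ht]; ring_nf
  have h2 : t ^ (2*θ-1) = t ^ θ * t ^ (θ-1) := by
    rw [← Real.rpow_add ht]; ring_nf
  have h1 : t ^ (θ-1) = t * t ^ (θ-2) := by
    rw [show θ-1 = 1 + (θ-2) by ring, Real.rpow_add ht, Real.rpow_one]
  rw [h3, h2, h1]
  have hu : 0 < t ^ (θ-2) := Real.rpow_pos_of_pos ht _
  have h3γ : 0 ≤ 3 - γ := by linarith
  have hgap : 0 ≤ (γ-1)^2 * (3-γ) * t ^ (θ-2) * ((γ-1) * t + (3-γ)) :=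
    mul_nonneg (mul_nonneg (mul_nonneg (sq_nonneg (γ-1)) h3γ) hu.le)
      (add_nonneg (mul_nonneg (sub_nonneg.2 hγ1.le) ht.le) h3γ)
  linear_combination hgap
end

section
/- Let γ with 1 < γ ≤ 5/3. Let ξ be the smaller root of (5γ−3)X² − 2(3γ−1)X + γ(3−γ) = 0 and η the larger root of 3(5γ−3)X² − 8γX + 3−γ = 0. Then ξ < η. -/
theorem stmt_18 (γ ξ η : ℝ) (hγ1 : 1 < γ) (hγ2 : γ ≤ 5/3)
    (hξ : ξ = ((3*γ-1) - Real.sqrt ((3*γ-1)^2 - (5*γ-3)*(γ*(3-γ)))) / (5*γ-3))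
    (hη : η = (4*γ + Real.sqrt ((4*γ)^2 - 3*(5*γ-3)*(3-γ))) / (3*(5*γ-3))) :
    ξ < η := by
  have hden : (0:ℝ) < 5*γ-3 := by linarith
  set s := Real.sqrt (5*γ+1) with hsdef
  have hs_sq : s^2 = 5*γ+1 := Real.sq_sqrt (by linarith)
  have hs_key : (3*γ-1)/2 < s := by
    rw [hsdef]
    rw [show (3*γ-1)/2 = Real.sqrt (((3*γ-1)/2)^2) from
      (Real.sqrt_sq (by linarith)).symm]
    apply Real.sqrt_lt_sqrt (by positivity)
    nlinarith
  have hD1 : (3*γ-1)^2 - (5*γ-3)*(γ*(3-γ)) = (γ-1)^2 * (5*γ+1) := by ring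
  have hs1 : Real.sqrt ((3*γ-1)^2 - (5*γ-3)*(γ*(3-γ))) = (γ-1) * s := by
    rw [hD1, Real.sqrt_mul (sq_nonneg _), Real.sqrt_sq (by linarith)]
  set B := Real.sqrt ((4*γ)^2 - 3*(5*γ-3)*(3-γ)) with hBdef
  have hD2pos : (0:ℝ) < (4*γ)^2 - 3*(5*γ-3)*(3-γ) := by
    nlinarith [sq_nonneg (31*γ-27)]
  have hB_sq : B^2 = (4*γ)^2 - 3*(5*γ-3)*(3-γ) := Real.sq_sqrt hD2pos.le
  have hB_nonneg : 0 ≤ B := Real.sqrt_nonneg _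
  -- key: (5γ-3 - 3(γ-1)s)^2 < B^2
  have hkey : (5*γ-3 - 3*(γ-1)*s)^2 < B^2 := by
    rw [hB_sq]
    nlinarith [mul_pos (mul_pos (by linarith : (0:ℝ) < γ-1) hden)
      (by linarith : (0:ℝ) < 2*s - (3*γ-1)), hs_sq]
  have habs : |5*γ-3 - 3*(γ-1)*s| < B := by
    rw [← Real.sqrt_sq_eq_abs]
    calc Real.sqrt ((5*γ-3 - 3*(γ-1)*s)^2) < Real.sqrt (B^2) :=
          Real.sqrt_lt_sqrt (sq_nonneg _) hkey
      _ = B := Real.sqrt_sq hB_nonneg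
  have hfin : 5*γ-3 - 3*(γ-1)*s < B := (abs_lt.mp habs).2
  rw [hξ, hη, hs1]
  rw [div_lt_div_iff₀ hden (by linarith)]
  nlinarith
end
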